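/- arXiv:math/0610117 — 11 statements merged into one kernel-verified Lean document; each statement's English description precedes it below -/
import Mathlib

section
/- Let Λ be a semiring and let G --λ--> B --τ--> C be a Schreier extension of Λ-semimodules in which G is a Λ-module (i.e., its additive monoid is an abelian group). Then every element of B is a representative of the extension: for every u ∈ B and every b ∈ B with τ(b) = τ(u), there exists a unique a ∈ G with b = λ(a) + u. -/
/-- A sequence `A --l--> B --t--> C` of `Λ`-semimodules and `Λ`-homomorphisms is a
Schreier extension if `l` is injective, `t` is surjective, the image of `l` equals the
kernel of `t`, and every fiber of `t` contains a representative, i.e. an element `u`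
such that every `b` in that fiber is uniquely of the form `l a + u`. -/
def IsSchreierExt {Λ A B C : Type*} [Semiring Λ] [AddCommMonoid A] [AddCommMonoid B]
    [AddCommMonoid C] [Module Λ A] [Module Λ B] [Module Λ C]
    (l : A →ₗ[Λ] B) (t : B →ₗ[Λ] C) : Prop :=
  Function.Injective l ∧ Function.Surjective t ∧
    (∀ b : B, t b = 0 ↔ ∃ a : A, l a = b) ∧
    ∀ c : C, ∃ u : B, t u = c ∧ ∀ b : B, t b = c → ∃! a : A, b = l a + u

/-- If `G --l--> B --t--> C` is a Schreier extension of `Λ`-semimodules with `G` a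
`Λ`-module (its additive monoid is a group), then every element of `B` is a
representative of the extension. -/
theorem every_element_is_representative_of_module_kernel
    {Λ G B C : Type*} [Semiring Λ] [AddCommMonoid G] [AddCommMonoid B]
    [AddCommMonoid C] [Module Λ G] [Module Λ B] [Module Λ C]
    (l : G →ₗ[Λ] B) (t : B →ₗ[Λ] C) (hS : IsSchreierExt l t)
    (hG : ∀ g : G, ∃ g' : G, g + g' = 0) :
    ∀ u b : B, t b = t u → ∃! a : G, b = l a + u := by
  obtain ⟨hinj, hsurj, hker, hrep⟩ := hS
  -- cancellation in G
  have hcancel : ∀ x y z : G, x + z = y + z → x = y := by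
    intro x y z h
    obtain ⟨z', hz'⟩ := hG z
    have := congrArg (· + z') h
    simpa [add_assoc, hz'] using this
  intro u b hb
  obtain ⟨v, hv, huniq⟩ := hrep (t u)
  obtain ⟨a, ha, hau⟩ := huniq b hb
  obtain ⟨a', ha', ha'u⟩ := huniq u rfl
  obtain ⟨n, hn⟩ := hG a'
  refine ⟨a + n, ?_, ?_⟩
  · have hx : (a + n) + a' = a := by
      rw [add_assoc, add_comm n a', hn, add_zero]
    calc b = l a + v := ha
    _ = l ((a + n) + a') + v := by rw [hx]
    _ = l (a + n) + (l a' + v) := by rw [map_add, add_assoc]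
    _ = l (a + n) + u := by rw [← ha']
  · intro y hy
    have hx : (a + n) + a' = a := by
      rw [add_assoc, add_comm n a', hn, add_zero]
    have hb' : b = l (y + a') + v := by
      rw [map_add, add_assoc, ← ha', hy]
    have h1 : y + a' = a := hau _ hb'
    exact hcancel y (a + n) a' (by rw [h1, hx])
end

section
/- Let Λ be a semiring and let A --λ--> B --τ--> C be a Schreier extension of Λ-semimodules with A cancellative. If λ(a) + b₁ = λ(a) + b₂ for some a ∈ A and b₁, b₂ ∈ B, then b₁ = b₂. -/
/-- In a Schreier extension `A --l--> B --t--> C` with `A` cancellative,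
`l a + b₁ = l a + b₂` implies `b₁ = b₂`. -/
theorem add_left_cancel_of_schreier_of_cancellative
    {Λ A B C : Type*} [Semiring Λ] [AddCommMonoid A] [AddCommMonoid B]
    [AddCommMonoid C] [Module Λ A] [Module Λ B] [Module Λ C]
    (l : A →ₗ[Λ] B) (t : B →ₗ[Λ] C) (hS : IsSchreierExt l t)
    (hA : ∀ x y z : A, x + y = x + z → y = z)
    (a : A) (b₁ b₂ : B) (h : l a + b₁ = l a + b₂) : b₁ = b₂ := by
  obtain ⟨hinj, hsurj, hker, hrep⟩ := hS
  have hla : t (l a) = 0 := (hker (l a)).mpr ⟨a, rfl⟩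
  have htb : t b₁ = t b₂ := by
    have := congrArg t h
    simpa [map_add, hla] using this
  obtain ⟨u, hu, huniq⟩ := hrep (t b₂)
  obtain ⟨a₁, ha₁, _⟩ := huniq b₁ htb
  obtain ⟨a₂, ha₂, _⟩ := huniq b₂ rfl
  have key : l a + b₁ = l (a + a₁) + u := by
    rw [ha₁, map_add, add_assoc]
  have key2 : l a + b₂ = l (a + a₂) + u := by
    rw [ha₂, map_add, add_assoc]
  have ht : t (l a + b₂) = t b₂ := by simp [map_add, hla]
  obtain ⟨a', ha', huniq'⟩ := huniq (l a + b₂) ht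
  have e1 : a + a₁ = a' := huniq' (a + a₁) (h ▸ key)
  have e2 : a + a₂ = a' := huniq' (a + a₂) key2
  have : a₁ = a₂ := hA a _ _ (e1.trans e2.symm)
  rw [ha₁, ha₂, this]
end

section
/- Let Λ be a semiring and let A --λ--> B --τ--> C be a Schreier extension of Λ-semimodules. Then B is cancellative if and only if both A and C are cancellative. -/
/-- In a Schreier extension `A --l--> B --t--> C`, the middle semimodule `B` is
cancellative if and only if both `A` and `C` are cancellative. -/
theorem middle_cancellative_iff_of_schreier
    {Λ A B C : Type*} [Semiring Λ] [AddCommMonoid A] [AddCommMonoid B]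
    [AddCommMonoid C] [Module Λ A] [Module Λ B] [Module Λ C]
    (l : A →ₗ[Λ] B) (t : B →ₗ[Λ] C) (hS : IsSchreierExt l t) :
    (∀ x y z : B, x + y = x + z → y = z) ↔
      (∀ x y z : A, x + y = x + z → y = z) ∧ (∀ x y z : C, x + y = x + z → y = z) := by
  obtain ⟨hinj, hsurj, hker, hrep⟩ := hS
  have htl : ∀ a : A, t (l a) = 0 := fun a => (hker (l a)).mpr ⟨a, rfl⟩
  constructor
  · intro hB
    constructor
    · intro x y z h
      apply hinj
      apply hB (l x)
      rw [← map_add, ← map_add, h]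
    · intro x y z h
      obtain ⟨bx, hbx⟩ := hsurj x
      obtain ⟨by', hby⟩ := hsurj y
      obtain ⟨bz, hbz⟩ := hsurj z
      obtain ⟨u, hu, hufib⟩ := hrep (x + y)
      obtain ⟨a1, ha1, -⟩ := hufib (bx + by') (by rw [map_add, hbx, hby])
      obtain ⟨a2, ha2, -⟩ := hufib (bx + bz)
        (by rw [map_add, hbx, hbz, h])
      have : bx + (by' + l a2) = bx + (bz + l a1) := by
        have e1 : bx + by' + l a2 = l a1 + l a2 + u := by
          rw [ha1]; abel
        have e2 : bx + bz + l a1 = l a1 + l a2 + u := by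
          rw [ha2]; abel
        have := e1.trans e2.symm
        rw [add_assoc, add_assoc] at this
        exact this
      have hc := hB bx _ _ this
      have := congrArg t hc
      rw [map_add, map_add, htl, htl, add_zero, add_zero, hby, hbz] at this
      exact this
  · rintro ⟨hA, hC⟩ x y z h
    have hty : t y = t z := by
      apply hC (t x)
      rw [← map_add, ← map_add, h]
    obtain ⟨u, hu, hufib⟩ := hrep (t y)
    obtain ⟨a, ha, -⟩ := hufib y rfl
    obtain ⟨a', ha', -⟩ := hufib z hty.symm
    obtain ⟨w, hw, hwfib⟩ := hrep (t (x + u))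
    obtain ⟨b, hb, -⟩ := hwfib (x + u) rfl
    have key : ∀ aa : A, t (l aa + x + u) = t (x + u) := by
      intro aa
      rw [map_add, map_add, map_add, htl, zero_add]
    have e1 : x + y = l (a + b) + w := by
      rw [ha, map_add]
      calc x + (l a + u) = l a + (x + u) := by abel
        _ = l a + (l b + w) := by rw [hb]
        _ = l a + l b + w := by abel
    have e2 : x + z = l (a' + b) + w := by
      rw [ha', map_add]
      calc x + (l a' + u) = l a' + (x + u) := by abel
        _ = l a' + (l b + w) := by rw [hb]
        _ = l a' + l b + w := by abel
    obtain ⟨c, -, hcu⟩ := hwfib (x + y)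
      (by rw [map_add, map_add, hu, ← map_add])
    have h1 : a + b = c := hcu _ e1
    have h2 : a' + b = c := hcu _ (by rw [h]; exact e2)
    have hab : b + a = b + a' := by
      have : a + b = a' + b := h1.trans h2.symm
      rwa [add_comm a b, add_comm a' b] at this
    have : a = a' := hA b a a' hab
    rw [ha, ha', this]
end

section
/- Let Λ be a semiring and let A --λ--> B --τ--> C be a Schreier extension of Λ-semimodules. Then the induced sequence of group completions 0 → K(A) --K(λ)--> K(B) --K(τ)--> K(C) → 0 is a short exact sequence of abelian groups: K(λ) is injective, K(τ) is surjective, and the image of K(λ) equals the kernel of K(τ). -/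
/-- The group completion `K(M)` of an abelian monoid `M`: the quotient of `M × M` by the
relation `(u,v) ~ (x,y) ↔ u + y + z = v + x + z` for some `z`. -/
def GC (M : Type*) [AddCommMonoid M] : Type _ :=
  Quot (fun p q : M × M => ∃ z : M, p.1 + q.2 + z = p.2 + q.1 + z)

/-- The class of a pair in the group completion. -/
def GC.mk {M : Type*} [AddCommMonoid M] (p : M × M) : GC M :=
  Quot.mk _ p

/-- The homomorphism `K(f) : K(M) → K(N)` induced on group completions by an additive
map `f : M → N`, sending `[u,v]` to `[f u, f v]`. -/
def GC.map {M N : Type*} [AddCommMonoid M] [AddCommMonoid N] (f : M → N)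
    (hf : ∀ x y : M, f (x + y) = f x + f y) : GC M → GC N :=
  Quot.lift (fun p => GC.mk (f p.1, f p.2)) (by
    rintro ⟨u, v⟩ ⟨x, y⟩ ⟨z, hz⟩
    apply Quot.sound
    refine ⟨f z, ?_⟩
    simp only [← hf]
    rw [hz])

theorem GC.exact {M : Type*} [AddCommMonoid M] {p q : M × M}
    (h : GC.mk p = GC.mk q) : ∃ z : M, p.1 + q.2 + z = p.2 + q.1 + z := by
  have h' := Quot.eqvGen_exact h
  clear h
  induction h' with
  | rel x y hxy => exact hxy
  | refl x => exact ⟨0, by rw [add_comm x.1 x.2]⟩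
  | symm x y _ ih =>
      obtain ⟨z, hz⟩ := ih
      exact ⟨z, by simpa [add_comm, add_left_comm, add_assoc] using hz.symm⟩
  | trans x y w _ _ ih1 ih2 =>
      obtain ⟨z1, hz1⟩ := ih1
      obtain ⟨z2, hz2⟩ := ih2
      refine ⟨y.1 + y.2 + z1 + z2, ?_⟩
      have e := congrArg₂ (· + ·) hz1 hz2
      simpa [add_comm, add_left_comm, add_assoc] using e

/-- If `A --l--> B --t--> C` is a Schreier extension of `Λ`-semimodules, then
`0 → K(A) → K(B) → K(C) → 0` is a short exact sequence of abelian groups: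
`K(l)` is injective, `K(t)` is surjective, and the image of `K(l)` equals the
kernel of `K(t)` (the preimage of the zero class `[0,0]`). -/
theorem groupCompletion_shortExact_of_schreier
    {Λ A B C : Type*} [Semiring Λ] [AddCommMonoid A] [AddCommMonoid B]
    [AddCommMonoid C] [Module Λ A] [Module Λ B] [Module Λ C]
    (l : A →ₗ[Λ] B) (t : B →ₗ[Λ] C) (hS : IsSchreierExt l t) :
    Function.Injective (GC.map (fun a => l a) (fun x y => map_add l x y)) ∧
    Function.Surjective (GC.map (fun b => t b) (fun x y => map_add t x y)) ∧
    ∀ β : GC B, GC.map (fun b => t b) (fun x y => map_add t x y) β = GC.mk (0, 0) ↔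
      ∃ α : GC A, GC.map (fun a => l a) (fun x y => map_add l x y) α = β := by
  obtain ⟨hinj, hsurj, hker, hfib⟩ := hS
  have h0 : ∀ a : A, t (l a) = 0 := fun a => (hker _).mpr ⟨a, rfl⟩
  refine ⟨?_, ?_, ?_⟩
  · -- injectivity of K(l)
    intro α β h
    induction α using Quot.ind with | mk p => ?_
    induction β using Quot.ind with | mk q => ?_
    obtain ⟨z, hz⟩ := GC.exact h
    obtain ⟨u, hu, hrep⟩ := hfib (t z)
    obtain ⟨a0, ha0, -⟩ := hrep z rfl
    apply Quot.sound
    refine ⟨a0, ?_⟩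
    have key : l (p.1 + q.2 + a0) + u = l (p.2 + q.1 + a0) + u := by
      have hz' := hz
      rw [ha0] at hz'
      simp only [map_add]
      simpa [add_comm, add_left_comm, add_assoc] using hz'
    have hxz : t (l (p.1 + q.2 + a0) + u) = t z := by
      rw [ha0]
      simp [map_add, h0]
    obtain ⟨a, ha, hun⟩ := hrep (l (p.1 + q.2 + a0) + u) hxz
    have hx : p.1 + q.2 + a0 = a := hun _ rfl
    have hy : p.2 + q.1 + a0 = a := hun _ key
    exact hx.trans hy.symm
  · -- surjectivity of K(t)
    intro γ
    induction γ using Quot.ind with | mk c => ?_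
    obtain ⟨b1, hb1⟩ := hsurj c.1
    obtain ⟨b2, hb2⟩ := hsurj c.2
    refine ⟨GC.mk (b1, b2), ?_⟩
    show GC.mk (t b1, t b2) = Quot.mk _ c
    rw [hb1, hb2]; rfl
  · -- exactness
    intro β
    induction β using Quot.ind with | mk p => ?_
    constructor
    · intro h
      obtain ⟨z, hz⟩ := GC.exact h
      obtain ⟨w, hw⟩ := hsurj z
      have htpw : t (p.2 + w) = t (p.1 + w) := by
        simp only [map_add, hw]
        simpa using hz.symm
      obtain ⟨u, hu, hrep⟩ := hfib (t (p.1 + w))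
      obtain ⟨a1, ha1, -⟩ := hrep (p.1 + w) rfl
      obtain ⟨a2, ha2, -⟩ := hrep (p.2 + w) htpw
      refine ⟨GC.mk (a1, a2), Quot.sound ⟨u + w, ?_⟩⟩
      have e : (l a1 + u) + (p.2 + w) = (l a2 + u) + (p.1 + w) := by
        rw [← ha1, ← ha2, add_comm]
      simpa [add_comm, add_left_comm, add_assoc] using e
    · rintro ⟨α, hα⟩
      induction α using Quot.ind with | mk a => ?_
      rw [← hα]
      show GC.mk (t (l a.1), t (l a.2)) = GC.mk (0, 0)
      rw [h0 a.1, h0 a.2]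
end

section
/- Let Λ be a semiring. Suppose given a commutative diagram of Λ-semimodules and Λ-homomorphisms with rows X --α--> Y --β--> Z and X' --α'--> Y' --β'--> Z', and vertical maps f : X → X', φ : Y → Y', ψ : Z → Z' (so φα = α'f and ψβ = β'φ), such that f is surjective, φ is injective, and β ∘ α = 0. Assume the bottom row is exact at Y' (the image of α' equals the kernel of β') and β' is normal. Then the top row is exact at Y and β is normal. -/
/-- A `Λ`-homomorphism `φ : A → B` of `Λ`-semimodules is normal if whenever
`φ a₁ = φ a₂` there exist `k₁, k₂ ∈ ker φ` with `k₁ + a₁ = k₂ + a₂`. -/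
def IsNormalHom {Λ A B : Type*} [Semiring Λ] [AddCommMonoid A] [AddCommMonoid B]
    [Module Λ A] [Module Λ B] (φ : A →ₗ[Λ] B) : Prop :=
  ∀ a₁ a₂ : A, φ a₁ = φ a₂ →
    ∃ k₁ k₂ : A, φ k₁ = 0 ∧ φ k₂ = 0 ∧ k₁ + a₁ = k₂ + a₂

/-- Given a commutative diagram of `Λ`-semimodules with rows `X --α--> Y --β--> Z` and
`X' --α'--> Y' --β'--> Z'` and vertical maps `f, φ, ψ`, where `f` is surjective, `φ` is
injective, `β ∘ α = 0`, the bottom row is exact at `Y'`, and `β'` is normal, the top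
row is exact at `Y` and `β` is normal. -/
theorem exact_and_normal_of_diagram
    {Λ X Y Z X' Y' Z' : Type*} [Semiring Λ]
    [AddCommMonoid X] [AddCommMonoid Y] [AddCommMonoid Z]
    [AddCommMonoid X'] [AddCommMonoid Y'] [AddCommMonoid Z']
    [Module Λ X] [Module Λ Y] [Module Λ Z]
    [Module Λ X'] [Module Λ Y'] [Module Λ Z']
    (α : X →ₗ[Λ] Y) (β : Y →ₗ[Λ] Z) (α' : X' →ₗ[Λ] Y') (β' : Y' →ₗ[Λ] Z')
    (f : X →ₗ[Λ] X') (φ : Y →ₗ[Λ] Y') (ψ : Z →ₗ[Λ] Z')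
    (hcomm₁ : ∀ x : X, φ (α x) = α' (f x))
    (hcomm₂ : ∀ y : Y, ψ (β y) = β' (φ y))
    (hf : Function.Surjective f) (hφ : Function.Injective φ)
    (hβα : ∀ x : X, β (α x) = 0)
    (hbot : ∀ y' : Y', β' y' = 0 ↔ ∃ x' : X', α' x' = y')
    (hβ' : IsNormalHom β') :
    (∀ y : Y, β y = 0 ↔ ∃ x : X, α x = y) ∧ IsNormalHom β := by
  have key : ∀ y' : Y', β' y' = 0 → ∃ x : X, φ (α x) = y' := by
    intro y' h
    obtain ⟨x', hx'⟩ := (hbot y').mp h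
    obtain ⟨x, rfl⟩ := hf x'
    exact ⟨x, by rw [hcomm₁, hx']⟩
  constructor
  · intro y
    constructor
    · intro h
      have h' : β' (φ y) = 0 := by rw [← hcomm₂, h, map_zero]
      obtain ⟨x, hx⟩ := key _ h'
      exact ⟨x, hφ hx⟩
    · rintro ⟨x, rfl⟩; exact hβα x
  · intro y₁ y₂ h
    have h' : β' (φ y₁) = β' (φ y₂) := by rw [← hcomm₂, ← hcomm₂, h]
    obtain ⟨k₁, k₂, hk₁, hk₂, hk⟩ := hβ' _ _ h'
    obtain ⟨x₁, hx₁⟩ := key _ hk₁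
    obtain ⟨x₂, hx₂⟩ := key _ hk₂
    refine ⟨α x₁, α x₂, hβα x₁, hβα x₂, hφ ?_⟩
    rw [map_add, map_add, hx₁, hx₂, hk]
end

section
/- Let Λ be a semiring and let E : A --κ--> B --σ--> C be a Schreier short exact sequence of chain complexes of Λ-semimodules and their morphisms such that each A_n is cancellative, each differential ∂_n⁻ of B preserves representatives, and either (i) σ is a ±-morphism or (ii) each C_n is cancellative. Then the connecting assignment is well defined on homology: for every n, if c₁, c₂ ∈ Z_n(C) satisfy c₁ ρ_n(C) c₂, u₁, u₂ ∈ B_n are representatives of E_n with σ_n(u₁) = c₁ and σ_n(u₂) = c₂, and a₁, a₂ ∈ A_{n−1} satisfy ∂_n⁺(u₁) = κ_{n−1}(a₁) + ∂_n⁻(u₁) and ∂_n⁺(u₂) = κ_{n−1}(a₂) + ∂_n⁻(u₂), then a₁, a₂ ∈ Z_{n−1}(A) and a₁ ρ_{n−1}(A) a₂. -/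
/-- A chain complex of `Λ`-semimodules: `Λ`-semimodules `X n` (`n : ℤ`) together with
`Λ`-homomorphisms `dp n, dm n : X (n+1) → X n` (the positive and negative differentials
out of level `n+1`) satisfying `∂⁺∂⁺ + ∂⁻∂⁻ = ∂⁺∂⁻ + ∂⁻∂⁺`. -/
structure SComplex (Λ : Type*) [Semiring Λ] where
  X : ℤ → Type*
  [acm : ∀ n, AddCommMonoid (X n)]
  [mod : ∀ n, Module Λ (X n)]
  dp : ∀ n : ℤ, X (n + 1) →ₗ[Λ] X n
  dm : ∀ n : ℤ, X (n + 1) →ₗ[Λ] X n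
  chain : ∀ (n : ℤ) (x : X (n + 1 + 1)),
    dp n (dp (n + 1) x) + dm n (dm (n + 1) x) = dp n (dm (n + 1) x) + dm n (dp (n + 1) x)

attribute [instance] SComplex.acm SComplex.mod

/-- A morphism of chain complexes of `Λ`-semimodules: a family of `Λ`-homomorphisms
`f n : A.X n → B.X n` with `∂'⁺ f + f ∂⁻ = ∂'⁻ f + f ∂⁺`. -/
def IsMorphism {Λ : Type*} [Semiring Λ] (A B : SComplex Λ)
    (f : ∀ n, A.X n →ₗ[Λ] B.X n) : Prop :=
  ∀ (n : ℤ) (x : A.X (n + 1)),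
    B.dp n (f (n + 1) x) + f n (A.dm n x) = B.dm n (f (n + 1) x) + f n (A.dp n x)

/-- A ±-morphism of chain complexes: a family commuting separately with the positive and
negative differentials. -/
def IsPMMorphism {Λ : Type*} [Semiring Λ] (A B : SComplex Λ)
    (f : ∀ n, A.X n →ₗ[Λ] B.X n) : Prop :=
  ∀ (n : ℤ) (x : A.X (n + 1)),
    f n (A.dp n x) = B.dp n (f (n + 1) x) ∧ f n (A.dm n x) = B.dm n (f (n + 1) x)

/-- A representative of a Schreier extension: `u : B` such that every element of the
fiber of `t` over `t u` is uniquely of the form `l a + u`. -/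
def IsRep {Λ A B C : Type*} [Semiring Λ] [AddCommMonoid A] [AddCommMonoid B]
    [AddCommMonoid C] [Module Λ A] [Module Λ B] [Module Λ C]
    (l : A →ₗ[Λ] B) (t : B →ₗ[Λ] C) (u : B) : Prop :=
  ∀ b : B, t b = t u → ∃! a : A, b = l a + u

/-- A Schreier short exact sequence of chain complexes of `Λ`-semimodules: a pair of
morphisms of chain complexes each of whose levels is a Schreier extension. -/
def IsSchreierSES {Λ : Type*} [Semiring Λ] (A B C : SComplex Λ)
    (κ : ∀ n, A.X n →ₗ[Λ] B.X n) (σ : ∀ n, B.X n →ₗ[Λ] C.X n) : Prop :=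
  IsMorphism A B κ ∧ IsMorphism B C σ ∧ ∀ n, IsSchreierExt (κ n) (σ n)

/-- In a Schreier extension with cancellative `A`, images of `l` may be cancelled in `B`. -/
theorem schreier_cancel {Λ A B C : Type*} [Semiring Λ] [AddCommMonoid A] [AddCommMonoid B]
    [AddCommMonoid C] [Module Λ A] [Module Λ B] [Module Λ C]
    {l : A →ₗ[Λ] B} {t : B →ₗ[Λ] C} (hext : IsSchreierExt l t)
    (hA : ∀ x y z : A, x + y = x + z → y = z)
    {z : B} {x y : A} (h : z + l x = z + l y) : x = y := by
  obtain ⟨-, -, hker, hrep⟩ := hext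
  obtain ⟨v, hv, hv2⟩ := hrep (t z)
  obtain ⟨e, he, -⟩ := hv2 z rfl
  have hb : t (z + l x) = t z := by
    have h0 : t (l x) = 0 := (hker (l x)).2 ⟨x, rfl⟩
    rw [map_add, h0, add_zero]
  obtain ⟨a₀, -, huniq⟩ := hv2 (z + l x) hb
  have h1 : e + x = a₀ := huniq _ (by show z + l x = l (e + x) + v; rw [he, map_add]; abel)
  have h2 : e + y = a₀ := huniq _ (by show z + l x = l (e + y) + v; rw [h, he, map_add]; abel)
  exact hA e x y (h1.trans h2.symm)

/-- The element produced by the connecting construction is a cycle. -/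
theorem cycle_aux {Λ : Type*} [Semiring Λ] {A B C : SComplex Λ}
    {κ : ∀ n, A.X n →ₗ[Λ] B.X n} {σ : ∀ n, B.X n →ₗ[Λ] C.X n}
    (hκ : IsMorphism A B κ) (hext : ∀ n, IsSchreierExt (κ n) (σ n))
    (hA : ∀ (n : ℤ) (x y z : A.X n), x + y = x + z → y = z)
    (m : ℤ) (u : B.X (m + 1 + 1)) (a : A.X (m + 1))
    (h : B.dp (m + 1) u = κ (m + 1) a + B.dm (m + 1) u) :
    A.dp m a = A.dm m a := by
  have hch := B.chain m u
  rw [h] at hch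
  simp only [map_add] at hch
  -- hch : B.dp m (κ (m+1) a) + B.dp m (B.dm (m+1) u) + B.dm m (B.dm (m+1) u)
  --     = B.dp m (B.dm (m+1) u) + (B.dm m (κ (m+1) a) + B.dm m (B.dm (m+1) u))
  have key : (B.dm m (κ (m + 1) a) + B.dp m (B.dm (m + 1) u) + B.dm m (B.dm (m + 1) u))
        + κ m (A.dp m a)
      = (B.dm m (κ (m + 1) a) + B.dp m (B.dm (m + 1) u) + B.dm m (B.dm (m + 1) u))
        + κ m (A.dm m a) := by
    calc (B.dm m (κ (m + 1) a) + B.dp m (B.dm (m + 1) u) + B.dm m (B.dm (m + 1) u))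
          + κ m (A.dp m a)
        = (B.dm m (κ (m + 1) a) + κ m (A.dp m a))
            + B.dp m (B.dm (m + 1) u) + B.dm m (B.dm (m + 1) u) := by abel
      _ = (B.dp m (κ (m + 1) a) + κ m (A.dm m a))
            + B.dp m (B.dm (m + 1) u) + B.dm m (B.dm (m + 1) u) := by rw [hκ m a]
      _ = (B.dp m (κ (m + 1) a) + B.dp m (B.dm (m + 1) u) + B.dm m (B.dm (m + 1) u))
            + κ m (A.dm m a) := by abel
      _ = (B.dp m (B.dm (m + 1) u) + (B.dm m (κ (m + 1) a) + B.dm m (B.dm (m + 1) u)))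
            + κ m (A.dm m a) := by rw [hch]
      _ = _ := by abel
  exact schreier_cancel (hext m) (hA m) key

/-- Let `E : A --κ--> B --σ--> C` be a Schreier short exact sequence of chain complexes
of `Λ`-semimodules with each `A n` cancellative and each negative differential of `B`
preserving representatives, and suppose either (i) `σ` is a ±-morphism or (ii) each
`C n` is cancellative.  Then the connecting assignment is well defined on homology:
if `c₁ ρ c₂` are congruent cycles, `u₁, u₂` representatives over them, and
`∂⁺ uᵢ = κ aᵢ + ∂⁻ uᵢ`, then `a₁, a₂` are cycles and `a₁ ρ a₂`. -/
theorem connecting_well_defined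
    {Λ : Type*} [Semiring Λ] (A B C : SComplex Λ)
    (κ : ∀ n, A.X n →ₗ[Λ] B.X n) (σ : ∀ n, B.X n →ₗ[Λ] C.X n)
    (hE : IsSchreierSES A B C κ σ)
    (hA : ∀ (n : ℤ) (x y z : A.X n), x + y = x + z → y = z)
    (hRep : ∀ (n : ℤ) (u : B.X (n + 1)),
      IsRep (κ (n + 1)) (σ (n + 1)) u → IsRep (κ n) (σ n) (B.dm n u))
    (hcase : IsPMMorphism B C σ ∨ ∀ (n : ℤ) (x y z : C.X n), x + y = x + z → y = z) :
    ∀ (m : ℤ) (c₁ c₂ : C.X (m + 1 + 1)),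
      C.dp (m + 1) c₁ = C.dm (m + 1) c₁ → C.dp (m + 1) c₂ = C.dm (m + 1) c₂ →
      (∃ p q : C.X (m + 1 + 1 + 1),
        c₁ + C.dp (m + 1 + 1) p + C.dm (m + 1 + 1) q =
          c₂ + C.dp (m + 1 + 1) q + C.dm (m + 1 + 1) p) →
      ∀ u₁ u₂ : B.X (m + 1 + 1),
        IsRep (κ (m + 1 + 1)) (σ (m + 1 + 1)) u₁ →
        IsRep (κ (m + 1 + 1)) (σ (m + 1 + 1)) u₂ →
        σ (m + 1 + 1) u₁ = c₁ → σ (m + 1 + 1) u₂ = c₂ →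
        ∀ a₁ a₂ : A.X (m + 1),
          B.dp (m + 1) u₁ = κ (m + 1) a₁ + B.dm (m + 1) u₁ →
          B.dp (m + 1) u₂ = κ (m + 1) a₂ + B.dm (m + 1) u₂ →
          (A.dp m a₁ = A.dm m a₁) ∧ (A.dp m a₂ = A.dm m a₂) ∧
          ∃ u v : A.X (m + 1 + 1),
            a₁ + A.dp (m + 1) u + A.dm (m + 1) v =
              a₂ + A.dp (m + 1) v + A.dm (m + 1) u := by
  obtain ⟨hκ, hσ, hext⟩ := hE
  intro m c₁ c₂ hc₁ hc₂ hrel u₁ u₂ hrep₁ hrep₂ hσu₁ hσu₂ a₁ a₂ ha₁ ha₂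
  refine ⟨cycle_aux hκ hext hA m u₁ a₁ ha₁, cycle_aux hκ hext hA m u₂ a₂ ha₂, ?_⟩
  obtain ⟨p, q, hpq⟩ := hrel
  obtain ⟨P, hP⟩ := (hext (m + 1 + 1 + 1)).2.1 p
  obtain ⟨Q, hQ⟩ := (hext (m + 1 + 1 + 1)).2.1 q
  have hσb : σ (m + 1 + 1) (u₁ + B.dp (m + 1 + 1) P + B.dm (m + 1 + 1) Q)
      = σ (m + 1 + 1) (u₂ + B.dp (m + 1 + 1) Q + B.dm (m + 1 + 1) P) := by
    rcases hcase with hpm | hC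
    · simp only [map_add]
      rw [(hpm (m + 1 + 1) P).1, (hpm (m + 1 + 1) P).2,
        (hpm (m + 1 + 1) Q).1, (hpm (m + 1 + 1) Q).2, hP, hQ, hσu₁, hσu₂, hpq]
    · have h1 := hσ (m + 1 + 1) P
      have h2 := hσ (m + 1 + 1) Q
      rw [hP] at h1
      rw [hQ] at h2
      refine hC (m + 1 + 1) (C.dm (m + 1 + 1) p + C.dm (m + 1 + 1) q) _ _ ?_
      calc C.dm (m + 1 + 1) p + C.dm (m + 1 + 1) q
            + σ (m + 1 + 1) (u₁ + B.dp (m + 1 + 1) P + B.dm (m + 1 + 1) Q)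
          = (C.dm (m + 1 + 1) p + σ (m + 1 + 1) (B.dp (m + 1 + 1) P))
              + (c₁ + C.dm (m + 1 + 1) q + σ (m + 1 + 1) (B.dm (m + 1 + 1) Q)) := by
            simp only [map_add]; rw [hσu₁]; abel
        _ = (C.dp (m + 1 + 1) p + σ (m + 1 + 1) (B.dm (m + 1 + 1) P))
              + (c₁ + C.dm (m + 1 + 1) q + σ (m + 1 + 1) (B.dm (m + 1 + 1) Q)) := by
            rw [h1]
        _ = (c₁ + C.dp (m + 1 + 1) p + C.dm (m + 1 + 1) q)
              + (σ (m + 1 + 1) (B.dm (m + 1 + 1) P) + σ (m + 1 + 1) (B.dm (m + 1 + 1) Q)) := by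
            abel
        _ = (c₂ + C.dp (m + 1 + 1) q + C.dm (m + 1 + 1) p)
              + (σ (m + 1 + 1) (B.dm (m + 1 + 1) P) + σ (m + 1 + 1) (B.dm (m + 1 + 1) Q)) := by
            rw [hpq]
        _ = (C.dp (m + 1 + 1) q + σ (m + 1 + 1) (B.dm (m + 1 + 1) Q))
              + (c₂ + C.dm (m + 1 + 1) p + σ (m + 1 + 1) (B.dm (m + 1 + 1) P)) := by abel
        _ = (C.dm (m + 1 + 1) q + σ (m + 1 + 1) (B.dp (m + 1 + 1) Q))
              + (c₂ + C.dm (m + 1 + 1) p + σ (m + 1 + 1) (B.dm (m + 1 + 1) P)) := by rw [h2]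
        _ = C.dm (m + 1 + 1) p + C.dm (m + 1 + 1) q
              + σ (m + 1 + 1) (u₂ + B.dp (m + 1 + 1) Q + B.dm (m + 1 + 1) P) := by
            simp only [map_add]; rw [hσu₂]; abel
  obtain ⟨r, hr, hrdec⟩ := (hext (m + 1 + 1)).2.2.2
    (σ (m + 1 + 1) (u₁ + B.dp (m + 1 + 1) P + B.dm (m + 1 + 1) Q))
  obtain ⟨e₁, he₁, -⟩ := hrdec _ rfl
  obtain ⟨e₂, he₂, -⟩ := hrdec _ hσb.symm
  have chP := B.chain (m + 1) P
  have chQ := B.chain (m + 1) Q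
  set W := B.dm (m + 1) u₁ + B.dm (m + 1) u₂
      + B.dp (m + 1) (B.dm (m + 1 + 1) P) + B.dm (m + 1) (B.dp (m + 1 + 1) P)
      + B.dp (m + 1) (B.dm (m + 1 + 1) Q) + B.dm (m + 1) (B.dp (m + 1 + 1) Q) with hW
  have hX : κ (m + 1) a₁ + W
      = B.dp (m + 1) (κ (m + 1 + 1) e₁ + r) + B.dm (m + 1) (κ (m + 1 + 1) e₂ + r) := by
    rw [← he₁, ← he₂, hW]
    calc κ (m + 1) a₁ + (B.dm (m + 1) u₁ + B.dm (m + 1) u₂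
            + B.dp (m + 1) (B.dm (m + 1 + 1) P) + B.dm (m + 1) (B.dp (m + 1 + 1) P)
            + B.dp (m + 1) (B.dm (m + 1 + 1) Q) + B.dm (m + 1) (B.dp (m + 1 + 1) Q))
        = (κ (m + 1) a₁ + B.dm (m + 1) u₁) + B.dm (m + 1) u₂
            + (B.dp (m + 1) (B.dm (m + 1 + 1) P) + B.dm (m + 1) (B.dp (m + 1 + 1) P))
            + B.dp (m + 1) (B.dm (m + 1 + 1) Q) + B.dm (m + 1) (B.dp (m + 1 + 1) Q) := by
          abel
      _ = B.dp (m + 1) u₁ + B.dm (m + 1) u₂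
            + (B.dp (m + 1) (B.dp (m + 1 + 1) P) + B.dm (m + 1) (B.dm (m + 1 + 1) P))
            + B.dp (m + 1) (B.dm (m + 1 + 1) Q) + B.dm (m + 1) (B.dp (m + 1 + 1) Q) := by
          rw [← ha₁, chP]
      _ = B.dp (m + 1) (u₁ + B.dp (m + 1 + 1) P + B.dm (m + 1 + 1) Q)
            + B.dm (m + 1) (u₂ + B.dp (m + 1 + 1) Q + B.dm (m + 1 + 1) P) := by
          simp only [map_add]; abel
  have hY : κ (m + 1) a₂ + W
      = B.dm (m + 1) (κ (m + 1 + 1) e₁ + r) + B.dp (m + 1) (κ (m + 1 + 1) e₂ + r) := by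
    rw [← he₁, ← he₂, hW]
    calc κ (m + 1) a₂ + (B.dm (m + 1) u₁ + B.dm (m + 1) u₂
            + B.dp (m + 1) (B.dm (m + 1 + 1) P) + B.dm (m + 1) (B.dp (m + 1 + 1) P)
            + B.dp (m + 1) (B.dm (m + 1 + 1) Q) + B.dm (m + 1) (B.dp (m + 1 + 1) Q))
        = (κ (m + 1) a₂ + B.dm (m + 1) u₂) + B.dm (m + 1) u₁
            + (B.dp (m + 1) (B.dm (m + 1 + 1) Q) + B.dm (m + 1) (B.dp (m + 1 + 1) Q))
            + B.dp (m + 1) (B.dm (m + 1 + 1) P) + B.dm (m + 1) (B.dp (m + 1 + 1) P) := by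
          abel
      _ = B.dp (m + 1) u₂ + B.dm (m + 1) u₁
            + (B.dp (m + 1) (B.dp (m + 1 + 1) Q) + B.dm (m + 1) (B.dm (m + 1 + 1) Q))
            + B.dp (m + 1) (B.dm (m + 1 + 1) P) + B.dm (m + 1) (B.dp (m + 1 + 1) P) := by
          rw [← ha₂, chQ]
      _ = B.dm (m + 1) (u₁ + B.dp (m + 1 + 1) P + B.dm (m + 1 + 1) Q)
            + B.dp (m + 1) (u₂ + B.dp (m + 1 + 1) Q + B.dm (m + 1 + 1) P) := by
          simp only [map_add]; abel
  have k1 := hκ (m + 1) e₁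
  have k2 := hκ (m + 1) e₂
  have key : W + κ (m + 1) (a₁ + A.dm (m + 1) e₁ + A.dp (m + 1) e₂)
      = W + κ (m + 1) (a₂ + A.dm (m + 1) e₂ + A.dp (m + 1) e₁) := by
    calc W + κ (m + 1) (a₁ + A.dm (m + 1) e₁ + A.dp (m + 1) e₂)
        = (κ (m + 1) a₁ + W) + κ (m + 1) (A.dm (m + 1) e₁) + κ (m + 1) (A.dp (m + 1) e₂) := by
          simp only [map_add]; abel
      _ = (B.dp (m + 1) (κ (m + 1 + 1) e₁ + r) + B.dm (m + 1) (κ (m + 1 + 1) e₂ + r))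
            + κ (m + 1) (A.dm (m + 1) e₁) + κ (m + 1) (A.dp (m + 1) e₂) := by rw [hX]
      _ = (B.dp (m + 1) (κ (m + 1 + 1) e₁) + κ (m + 1) (A.dm (m + 1) e₁))
            + (B.dm (m + 1) (κ (m + 1 + 1) e₂) + κ (m + 1) (A.dp (m + 1) e₂))
            + B.dp (m + 1) r + B.dm (m + 1) r := by simp only [map_add]; abel
      _ = (B.dm (m + 1) (κ (m + 1 + 1) e₁) + κ (m + 1) (A.dp (m + 1) e₁))
            + (B.dm (m + 1) (κ (m + 1 + 1) e₂) + κ (m + 1) (A.dp (m + 1) e₂))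
            + B.dp (m + 1) r + B.dm (m + 1) r := by rw [k1]
      _ = (B.dm (m + 1) (κ (m + 1 + 1) e₁) + κ (m + 1) (A.dp (m + 1) e₁))
            + (B.dp (m + 1) (κ (m + 1 + 1) e₂) + κ (m + 1) (A.dm (m + 1) e₂))
            + B.dp (m + 1) r + B.dm (m + 1) r := by rw [k2]
      _ = (B.dm (m + 1) (κ (m + 1 + 1) e₁ + r) + B.dp (m + 1) (κ (m + 1 + 1) e₂ + r))
            + κ (m + 1) (A.dm (m + 1) e₂) + κ (m + 1) (A.dp (m + 1) e₁) := by
          simp only [map_add]; abel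
      _ = (κ (m + 1) a₂ + W) + κ (m + 1) (A.dm (m + 1) e₂) + κ (m + 1) (A.dp (m + 1) e₁) := by
          rw [hY]
      _ = W + κ (m + 1) (a₂ + A.dm (m + 1) e₂ + A.dp (m + 1) e₁) := by
          simp only [map_add]; abel
  have hfin : a₁ + A.dm (m + 1) e₁ + A.dp (m + 1) e₂
      = a₂ + A.dm (m + 1) e₂ + A.dp (m + 1) e₁ :=
    schreier_cancel (hext (m + 1)) (hA (m + 1)) key
  refine ⟨e₂, e₁, ?_⟩
  calc a₁ + A.dp (m + 1) e₂ + A.dm (m + 1) e₁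
      = a₁ + A.dm (m + 1) e₁ + A.dp (m + 1) e₂ := by abel
    _ = a₂ + A.dm (m + 1) e₂ + A.dp (m + 1) e₁ := hfin
    _ = a₂ + A.dp (m + 1) e₁ + A.dm (m + 1) e₂ := by abel
end

section
/- Let Λ be a semiring and let E : A --κ--> B --σ--> G be a Schreier short exact sequence of chain complexes of Λ-semimodules and their morphisms such that each A_n is cancellative, each differential ∂_n⁻ of B preserves representatives, and G is an ordinary chain complex of Λ-modules {G_n, δ_n} (each G_n an abelian group under addition, δ_n δ_{n+1} = 0, regarded as a chain complex with positive differential δ_n and negative differential 0). Then the long homology sequence is exact at H_n(B); concretely: for every n and every b ∈ Z_n(B) such that σ_n(b) = δ_{n+1}(g) for some g ∈ G_{n+1}, there exist a ∈ Z_n(A) and u ∈ B_{n+1} with b + ∂_{n+1}⁺(u) = κ_n(a) + ∂_{n+1}⁻(u); in particular κ_n(a) ρ_n(B) b. -/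
/-- Let `E : A --κ--> B --σ--> G` be a Schreier short exact sequence of chain complexes
of `Λ`-semimodules with each `A n` cancellative, each negative differential of `B`
preserving representatives, and `G` an ordinary chain complex of `Λ`-modules (additive
groups, negative differentials zero).  Then the long homology sequence is exact at
`Hₙ(B)`: any cycle `b` of `B` with `σ b` a boundary in `G` is `ρ`-congruent to the
image of a cycle of `A`. -/
theorem long_sequence_exact_at_B
    {Λ : Type*} [Semiring Λ] (A B G : SComplex Λ)
    (κ : ∀ n, A.X n →ₗ[Λ] B.X n) (σ : ∀ n, B.X n →ₗ[Λ] G.X n)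
    (hE : IsSchreierSES A B G κ σ)
    (hA : ∀ (n : ℤ) (x y z : A.X n), x + y = x + z → y = z)
    (hRep : ∀ (n : ℤ) (u : B.X (n + 1)),
      IsRep (κ (n + 1)) (σ (n + 1)) u → IsRep (κ n) (σ n) (B.dm n u))
    (hGgrp : ∀ (n : ℤ) (g : G.X n), ∃ g' : G.X n, g + g' = 0)
    (hGm : ∀ n : ℤ, G.dm n = 0) :
    ∀ (m : ℤ) (b : B.X (m + 1)), B.dp m b = B.dm m b →
      ∀ g : G.X (m + 1 + 1), σ (m + 1) b = G.dp (m + 1) g →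
        ∃ a : A.X (m + 1), (A.dp m a = A.dm m a) ∧
          (∃ u : B.X (m + 1 + 1),
            b + B.dp (m + 1) u = κ (m + 1) a + B.dm (m + 1) u) ∧
          ∃ u v : B.X (m + 1 + 1),
            κ (m + 1) a + B.dp (m + 1) u + B.dm (m + 1) v =
              b + B.dp (m + 1) v + B.dm (m + 1) u := by
  intro m b hb g hg
  obtain ⟨hκmor, hσmor, hext⟩ := hE
  -- σ ∘ κ = 0
  have hσκ : ∀ (n : ℤ) (x : A.X n), σ n (κ n x) = 0 :=
    fun n x => ((hext n).2.2.1 (κ n x)).2 ⟨x, rfl⟩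
  -- choose g' with g + g' = 0
  obtain ⟨g', hg'⟩ := hGgrp (m + 1 + 1) g
  -- choose a representative u' over g'
  obtain ⟨u', hu'σ, hu'rep⟩ := (hext (m + 1 + 1)).2.2.2 g'
  have hrepu' : IsRep (κ (m + 1 + 1)) (σ (m + 1 + 1)) u' := by
    intro x hx
    exact hu'rep x (by rw [hx, hu'σ])
  have hrepdm : IsRep (κ (m + 1)) (σ (m + 1)) (B.dm (m + 1) u') :=
    hRep (m + 1) u' hrepu'
  -- σ (b + ∂⁺ u') = σ (∂⁻ u')
  have hσrel := hσmor (m + 1) u'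
  rw [hGm (m + 1)] at hσrel
  simp only [LinearMap.zero_apply, zero_add] at hσrel
  have key : σ (m + 1) (b + B.dp (m + 1) u') = σ (m + 1) (B.dm (m + 1) u') := by
    rw [map_add, hg, ← hσrel, hu'σ, ← add_assoc, ← map_add, hg', map_zero, zero_add]
  obtain ⟨a, ha_eq, -⟩ := hrepdm (b + B.dp (m + 1) u') key
  -- ha_eq : b + ∂⁺ u' = κ a + ∂⁻ u'
  refine ⟨a, ?_, ⟨u', ha_eq⟩, ⟨0, u', ?_⟩⟩
  · -- a is a cycle
    set s := B.dp m (κ (m + 1) a) with hs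
    set t := B.dm m (κ (m + 1) a) with ht
    set p := κ m (A.dp m a) with hp
    set q := κ m (A.dm m a) with hq
    have h4 : s + q = t + p := hκmor m a
    set w := B.dp m (B.dm (m + 1) u') + B.dm m (B.dm (m + 1) u') with hw
    have h1 : B.dp m b + B.dp m (B.dp (m + 1) u') = s + B.dp m (B.dm (m + 1) u') := by
      rw [← map_add, ha_eq, map_add]
    have h2 : B.dm m b + B.dm m (B.dp (m + 1) u') = t + B.dm m (B.dm (m + 1) u') := by
      rw [← map_add, ha_eq, map_add]
    have h3 := B.chain m u'
    have hstw : t + w = s + w := by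
      have calc1 : B.dp m b + (B.dp m (B.dp (m + 1) u') + B.dm m (B.dm (m + 1) u'))
          = s + w := by
        rw [hw, ← add_assoc, ← add_assoc, h1]
      rw [h3, hb] at calc1
      calc t + w = B.dm m b + B.dm m (B.dp (m + 1) u') + B.dp m (B.dm (m + 1) u') := by
            rw [h2, hw]; abel
        _ = s + w := by rw [← calc1]; abel
    have hWpq : (t + w) + p = (t + w) + q := by
      calc (t + w) + p = (t + p) + w := by abel
        _ = (s + q) + w := by rw [h4]
        _ = (s + w) + q := by abel
        _ = (t + w) + q := by rw [hstw]
    set W := t + w with hW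
    -- use a representative at level m
    obtain ⟨r, hrσ, hrrep⟩ := (hext m).2.2.2 (σ m W)
    obtain ⟨a₀, ha₀, -⟩ := hrrep W rfl
    have hσp : σ m (W + p) = σ m W := by rw [map_add, hp, hσκ, add_zero]
    obtain ⟨a₁, -, huniq⟩ := hrrep (W + p) hσp
    have e1 : W + p = κ m (a₀ + A.dp m a) + r := by
      rw [map_add, ha₀]; abel
    have e2 : W + p = κ m (a₀ + A.dm m a) + r := by
      rw [hWpq, map_add, ha₀]; abel
    have := (huniq _ e1).trans (huniq _ e2).symm
    exact hA m a₀ _ _ this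
  · -- the ρ-relation
    rw [map_zero, map_zero, add_zero, add_zero, ← ha_eq]
end

section
/- Let Λ be a semiring and let E : G --κ--> B --σ--> C be a Schreier short exact sequence of chain complexes of Λ-semimodules and their morphisms, where G is an ordinary chain complex of Λ-modules {G_n, d_n} (each G_n an abelian group under addition, d_n d_{n+1} = 0, regarded as a chain complex with positive differential d_n and negative differential 0). Then the long homology sequence is exact at H_n(C) in the following concrete sense: for every n, every c ∈ Z_n(C), every b ∈ B_n with σ_n(b) = c, and the (unique) g ∈ G_{n−1} with ∂_n⁺(b) = κ_{n−1}(g) + ∂_n⁻(b), if g = d_n(h) for some h ∈ G_n, then the element b' = b + κ_n(−h) satisfies b' ∈ Z_n(B) and σ_n(b') = c. -/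
/-- Let `E : G --κ--> B --σ--> C` be a Schreier short exact sequence of chain complexes
of `Λ`-semimodules with `G` an ordinary chain complex of `Λ`-modules (additive groups,
negative differentials zero).  Exactness at `Hₙ(C)`: if `c` is a cycle of `C`,
`σ b = c`, `∂⁺ b = κ g + ∂⁻ b`, and `g = d h` is a boundary, then for any additive
inverse `h'` of `h` the element `b' = b + κ h'` is a cycle of `B` with `σ b' = c`. -/
theorem exact_at_C
    {Λ : Type*} [Semiring Λ] (G B C : SComplex Λ)
    (κ : ∀ n, G.X n →ₗ[Λ] B.X n) (σ : ∀ n, B.X n →ₗ[Λ] C.X n)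
    (hE : IsSchreierSES G B C κ σ)
    (hGgrp : ∀ (n : ℤ) (g : G.X n), ∃ g' : G.X n, g + g' = 0)
    (hGm : ∀ n : ℤ, G.dm n = 0) :
    ∀ (m : ℤ) (c : C.X (m + 1)), C.dp m c = C.dm m c →
      ∀ b : B.X (m + 1), σ (m + 1) b = c →
        ∀ g : G.X m, B.dp m b = κ m g + B.dm m b →
          ∀ h : G.X (m + 1), g = G.dp m h →
            ∀ h' : G.X (m + 1), h + h' = 0 →
              B.dp m (b + κ (m + 1) h') = B.dm m (b + κ (m + 1) h') ∧
              σ (m + 1) (b + κ (m + 1) h') = c := by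
  obtain ⟨hκ, hσ, hext⟩ := hE
  intro m c hc b hb g hg h hgh h' hh'
  have hσκ : σ (m + 1) (κ (m + 1) h') = 0 := by
    exact ((hext (m + 1)).2.2.1 (κ (m + 1) h')).2 ⟨h', rfl⟩
  constructor
  · have hmor := hκ m h'
    rw [hGm m] at hmor
    simp only [LinearMap.zero_apply, map_zero, add_zero] at hmor
    have key : B.dp m (κ (m + 1) h') = B.dm m (κ (m + 1) h') + κ m (G.dp m h') := hmor
    have hsum : g + G.dp m h' = 0 := by
      rw [hgh, ← map_add, hh', map_zero]
    calc B.dp m (b + κ (m + 1) h')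
        = B.dp m b + B.dp m (κ (m + 1) h') := map_add _ _ _
      _ = (κ m g + B.dm m b) + (B.dm m (κ (m + 1) h') + κ m (G.dp m h')) := by
          rw [hg, key]
      _ = κ m (g + G.dp m h') + (B.dm m b + B.dm m (κ (m + 1) h')) := by
          rw [map_add]; abel
      _ = B.dm m (b + κ (m + 1) h') := by
          rw [hsum, map_zero, zero_add, map_add]
  · rw [map_add, hσκ, add_zero, hb]
end

section
/- Let Λ be a semiring and let f = {f_n} : X → X' be a morphism of chain complexes of Λ-semimodules. Define the mapping cone C_f by (C_f)_n = X_{n−1} ⊕ X'_n with d_n⁺(x, x') = (∂_{n−1}⁻(x), ∂'_n⁺(x') + f_{n−1}(x)) and d_n⁻(x, x') = (∂_{n−1}⁺(x), ∂'_n⁻(x')). Then C_f is a chain complex of Λ-semimodules: d_n⁺ d_{n+1}⁺ + d_n⁻ d_{n+1}⁻ = d_n⁺ d_{n+1}⁻ + d_n⁻ d_{n+1}⁺ for all n. -/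
/-- The positive differential of the mapping cone of `f : X → X'`, mapping cone level
`p+2` (that is, `X (p+1) ⊕ X' (p+2)`) to cone level `p+1` (that is, `X p ⊕ X' (p+1)`):
`(x, x') ↦ (∂⁻ x, ∂'⁺ x' + f x)`. -/
def coneDp {Λ : Type*} [Semiring Λ] (X X' : SComplex Λ) (f : ∀ n, X.X n →ₗ[Λ] X'.X n)
    (p : ℤ) : X.X (p + 1) × X'.X (p + 1 + 1) → X.X p × X'.X (p + 1) :=
  fun z => (X.dm p z.1, X'.dp (p + 1) z.2 + f (p + 1) z.1)

/-- The negative differential of the mapping cone: `(x, x') ↦ (∂⁺ x, ∂'⁻ x')`. -/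
def coneDm {Λ : Type*} [Semiring Λ] (X X' : SComplex Λ) (p : ℤ) :
    X.X (p + 1) × X'.X (p + 1 + 1) → X.X p × X'.X (p + 1) :=
  fun z => (X.dp p z.1, X'.dm (p + 1) z.2)

/-- The mapping cone of a morphism `f : X → X'` of chain complexes of `Λ`-semimodules
is a chain complex: its differentials satisfy `d⁺d⁺ + d⁻d⁻ = d⁺d⁻ + d⁻d⁺`. -/
theorem mappingCone_is_complex
    {Λ : Type*} [Semiring Λ] (X X' : SComplex Λ)
    (f : ∀ n, X.X n →ₗ[Λ] X'.X n) (hf : IsMorphism X X' f) :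
    ∀ (p : ℤ) (z : X.X (p + 1 + 1) × X'.X (p + 1 + 1 + 1)),
      coneDp X X' f p (coneDp X X' f (p + 1) z) + coneDm X X' p (coneDm X X' (p + 1) z) =
        coneDp X X' f p (coneDm X X' (p + 1) z) + coneDm X X' p (coneDp X X' f (p + 1) z) := by
  intro p z
  obtain ⟨x, x'⟩ := z
  have h1 := X.chain p x
  have h2 := X'.chain (p + 1) x'
  have h3 := hf (p + 1) x
  simp only [coneDp, coneDm, Prod.mk_add_mk, Prod.mk.injEq, map_add]
  constructor
  · rw [add_comm, h1, add_comm]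
  · calc X'.dp (p+1) (X'.dp (p+1+1) x') + X'.dp (p+1) (f (p+1+1) x) + f (p+1) (X.dm (p+1) x)
        + X'.dm (p+1) (X'.dm (p+1+1) x')
        = (X'.dp (p+1) (X'.dp (p+1+1) x') + X'.dm (p+1) (X'.dm (p+1+1) x'))
          + (X'.dp (p+1) (f (p+1+1) x) + f (p+1) (X.dm (p+1) x)) := by abel
      _ = (X'.dp (p+1) (X'.dm (p+1+1) x') + X'.dm (p+1) (X'.dp (p+1+1) x'))
          + (X'.dm (p+1) (f (p+1+1) x) + f (p+1) (X.dp (p+1) x)) := by rw [h2, h3]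
      _ = _ := by abel
end

section
/- Let Λ be a semiring, let f = {f_n} : X → X' be a morphism of chain complexes of Λ-semimodules, and let C_f be the mapping cone, (C_f)_n = X_{n−1} ⊕ X'_n with d_n⁺(x, x') = (∂_{n−1}⁻(x), ∂'_n⁺(x') + f_{n−1}(x)) and d_n⁻(x, x') = (∂_{n−1}⁺(x), ∂'_n⁻(x')). Let X[−1] be the chain complex with X[−1]_n = X_{n−1} and differentials (∂[−1])_n⁺ = ∂_{n−1}⁻ and (∂[−1])_n⁻ = ∂_{n−1}⁺. Define (i_f)_n : X'_n → (C_f)_n by x' ↦ (0, x') and (p_f)_n : (C_f)_n → X[−1]_n by (x, x') ↦ x. Then i_f and p_f are ±-morphisms of chain complexes, and E_f : X' --i_f--> C_f --p_f--> X[−1] is a Schreier short exact sequence of chain complexes (each level is a Schreier extension of Λ-semimodules). -/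
/-- For a morphism `f : X → X'` of chain complexes of `Λ`-semimodules, the inclusion
`i_f : X' → C_f`, `x' ↦ (0, x')`, and the projection `p_f : C_f → X[−1]`,
`(x, x') ↦ x`, are ±-morphisms (recall that the differentials of `X[−1]` are
`∂[−1]⁺ = ∂⁻` and `∂[−1]⁻ = ∂⁺`), and `E_f : X' --i_f--> C_f --p_f--> X[−1]` is a
Schreier short exact sequence of chain complexes (each level is a Schreier extension). -/
theorem mappingCone_schreier_ses
    {Λ : Type*} [Semiring Λ] (X X' : SComplex Λ)
    (f : ∀ n, X.X n →ₗ[Λ] X'.X n) (hf : IsMorphism X X' f) :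
    (∀ (p : ℤ) (x' : X'.X (p + 1 + 1)),
      ((0 : X.X p), X'.dp (p + 1) x') = coneDp X X' f p ((0 : X.X (p + 1)), x') ∧
      ((0 : X.X p), X'.dm (p + 1) x') = coneDm X X' p ((0 : X.X (p + 1)), x')) ∧
    (∀ (p : ℤ) (z : X.X (p + 1) × X'.X (p + 1 + 1)),
      (coneDp X X' f p z).1 = X.dm p z.1 ∧ (coneDm X X' p z).1 = X.dp p z.1) ∧
    (∀ p : ℤ, IsSchreierExt (LinearMap.inr Λ (X.X p) (X'.X (p + 1)))
      (LinearMap.fst Λ (X.X p) (X'.X (p + 1)))) := by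
  refine ⟨fun p x' => ⟨?_, ?_⟩, fun p z => ⟨rfl, rfl⟩, fun p => ?_⟩
  · simp [coneDp]
  · simp [coneDm]
  refine ⟨fun a b h => ?_, fun c => ⟨(c, 0), rfl⟩, fun b => ?_, fun c => ?_⟩
  · simpa using congrArg Prod.snd h
  · constructor
    · intro h; exact ⟨b.2, by ext <;> simp [h.symm]⟩
    · rintro ⟨a, rfl⟩; rfl
  · refine ⟨(c, 0), rfl, fun b hb => ⟨b.2, by ext <;> simp [hb.symm], fun a ha => ?_⟩⟩
    have := congrArg Prod.snd ha; simp at this; exact this.symm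
end

section
/- Let Λ be a semiring, let f = {f_n} : X → X' be a morphism of chain complexes of Λ-semimodules, and let E_f : X' --i_f--> C_f --p_f--> X[−1] be the mapping-cone Schreier short exact sequence, where (C_f)_n = X_{n−1} ⊕ X'_n, (i_f)_n(x') = (0, x'), (p_f)_n(x, x') = x, d_n⁺(x, x') = (∂_{n−1}⁻(x), ∂'_n⁺(x') + f_{n−1}(x)), and d_n⁻(x, x') = (∂_{n−1}⁺(x), ∂'_n⁻(x')). Then an element (x, x') ∈ X_{n−1} ⊕ X'_n is a representative of the level-n extension (E_f)_n if and only if x' has an additive inverse in X'_n. Consequently every differential d_n⁻ of C_f maps representatives of (E_f)_n to representatives of (E_f)_{n−1}. -/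
/-! In the extension `N → M × N → M` given by `inr` and `fst`, the fibre over `x` is
`{x} × N`, and `(x, b) = inr a + (x, x')` just says `b = a + x'`. Solving this for `b = 0`
produces an additive inverse of `x'`; conversely, if `x' + y' = 0`, then `a = b + y'` is a
solution, and the only one, since adding `y'` to `b = a + x'` recovers `a`. As `∂'⁻` is additive,
it carries additive inverses to additive inverses, hence representatives to representatives. -/

section InrFst

variable {R M N : Type*} [Semiring R] [AddCommMonoid M] [AddCommMonoid N]
  [Module R M] [Module R N]

theorem IsRep.exists_add_eq_zero {u : M × N}
    (hu : IsRep (LinearMap.inr R M N) (LinearMap.fst R M N) u) : ∃ y : N, u.2 + y = 0 := by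
  obtain ⟨a, ha, -⟩ := hu (u.1, 0) rfl
  exact ⟨a, by rw [add_comm]; exact (congrArg Prod.snd ha).symm⟩

theorem isRep_inr_fst_of_add_eq_zero {u : M × N} {y : N} (hy : u.2 + y = 0) :
    IsRep (LinearMap.inr R M N) (LinearMap.fst R M N) u := by
  rintro b (hb : b.1 = u.1)
  have hcancel : b.2 + y + u.2 = b.2 := by rw [add_assoc, add_comm y, hy, add_zero]
  refine ⟨b.2 + y, Prod.ext (by simpa using hb) (by simpa using hcancel.symm), ?_⟩
  rintro a (ha : b = (0, a) + u)
  calc a = a + (u.2 + y) := by rw [hy, add_zero]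
    _ = (a + u.2) + y := (add_assoc _ _ _).symm
    _ = b.2 + y := by rw [ha]; rfl

theorem isRep_inr_fst_iff (u : M × N) :
    IsRep (LinearMap.inr R M N) (LinearMap.fst R M N) u ↔ ∃ y : N, u.2 + y = 0 :=
  ⟨IsRep.exists_add_eq_zero, fun ⟨_, hy⟩ => isRep_inr_fst_of_add_eq_zero hy⟩

end InrFst

theorem mappingCone_representatives_general
    {Λ : Type*} [Semiring Λ] (X X' : SComplex Λ) :
    (∀ (p : ℤ) (u : X.X p × X'.X (p + 1)),
      IsRep (LinearMap.inr Λ (X.X p) (X'.X (p + 1)))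
        (LinearMap.fst Λ (X.X p) (X'.X (p + 1))) u ↔
      ∃ y' : X'.X (p + 1), u.2 + y' = 0) ∧
    ∀ (p : ℤ) (u : X.X (p + 1) × X'.X (p + 1 + 1)),
      IsRep (LinearMap.inr Λ (X.X (p + 1)) (X'.X (p + 1 + 1)))
        (LinearMap.fst Λ (X.X (p + 1)) (X'.X (p + 1 + 1))) u →
      IsRep (LinearMap.inr Λ (X.X p) (X'.X (p + 1)))
        (LinearMap.fst Λ (X.X p) (X'.X (p + 1))) (coneDm X X' p u) := by
  refine ⟨fun p u => isRep_inr_fst_iff u, fun p u hu => ?_⟩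
  obtain ⟨y, hy⟩ := hu.exists_add_eq_zero
  refine isRep_inr_fst_of_add_eq_zero (y := X'.dm (p + 1) y) ?_
  rw [coneDm, ← map_add, hy, map_zero]

/-- For the mapping-cone Schreier short exact sequence
`E_f : X' --i_f--> C_f --p_f--> X[−1]` of a morphism `f : X → X'` of chain complexes of
`Λ`-semimodules, an element `(x, x')` of a level of `C_f` is a representative of that
level of `E_f` iff `x'` has an additive inverse; consequently every negative
differential of `C_f` maps representatives to representatives. -/
theorem mappingCone_representatives
    {Λ : Type*} [Semiring Λ] (X X' : SComplex Λ)
    (f : ∀ n, X.X n →ₗ[Λ] X'.X n) (hf : IsMorphism X X' f) :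
    (∀ (p : ℤ) (u : X.X p × X'.X (p + 1)),
      IsRep (LinearMap.inr Λ (X.X p) (X'.X (p + 1)))
        (LinearMap.fst Λ (X.X p) (X'.X (p + 1))) u ↔
      ∃ y' : X'.X (p + 1), u.2 + y' = 0) ∧
    ∀ (p : ℤ) (u : X.X (p + 1) × X'.X (p + 1 + 1)),
      IsRep (LinearMap.inr Λ (X.X (p + 1)) (X'.X (p + 1 + 1)))
        (LinearMap.fst Λ (X.X (p + 1)) (X'.X (p + 1 + 1))) u →
      IsRep (LinearMap.inr Λ (X.X p) (X'.X (p + 1)))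
        (LinearMap.fst Λ (X.X p) (X'.X (p + 1))) (coneDm X X' p u) :=
  mappingCone_representatives_general X X'
end
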